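/- arXiv:math/0209236 — 7 statements merged into one kernel-verified Lean document; each statement's English description precedes it below -/
import Mathlib

section
/- Let S be a commutative Noetherian ring, M an S-module, and N a submodule of M. If x₁, …, xₙ are elements of S forming a regular sequence on M/N, then (x₁, …, xₙ)M ∩ N = (x₁, …, xₙ)N. -/
/-- The `q`-th Frobenius power of an ideal: the ideal generated by `q`-th powers of elements. -/
def Ideal.frobPow {R : Type*} [CommRing R] (I : Ideal R) (q : ℕ) : Ideal R :=
  Ideal.span ((fun a => a ^ q) '' (I : Set R))

/-- `R°`: the complement of the union of the minimal primes of `R`. -/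
def tightMultipliers (R : Type*) [CommRing R] : Set R :=
  {c | ∀ P ∈ minimalPrimes R, c ∉ P}

/-- The tight closure of an ideal `I` in a ring of characteristic `p`. -/
def tightClosure {R : Type*} [CommRing R] (p : ℕ) (I : Ideal R) : Set R :=
  {x | ∃ c ∈ tightMultipliers R, ∃ q₀ : ℕ, ∀ e : ℕ, q₀ ≤ p ^ e →
    c * x ^ p ^ e ∈ I.frobPow (p ^ e)}

/-- A minimal prime `P` is absolutely minimal if `dim R/P = dim R`. -/
def IsAbsolutelyMinimal {R : Type*} [CommRing R] (P : Ideal R) : Prop :=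
  P ∈ minimalPrimes R ∧ ringKrullDim (R ⧸ P) = ringKrullDim R

/-- `R^•`: the complement of the union of the absolutely minimal primes of `R`. -/
def neMultipliers (R : Type*) [CommRing R] : Set R :=
  {c | ∀ P : Ideal R, IsAbsolutelyMinimal P → c ∉ P}

/-- The NE closure of an ideal `I` in a ring of characteristic `p`. -/
def neClosure {R : Type*} [CommRing R] (p : ℕ) (I : Ideal R) : Set R :=
  {x | ∃ c ∈ neMultipliers R, ∃ q₀ : ℕ, ∀ e : ℕ, q₀ ≤ p ^ e →
    c * x ^ p ^ e ∈ I.frobPow (p ^ e)}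

/-- A system of parameters for a Noetherian local ring: `dim R` elements generating an
ideal primary to the maximal ideal. -/
def IsSOP {R : Type*} [CommRing R] [IsLocalRing R] {n : ℕ} (x : Fin n → R) : Prop :=
  ringKrullDim R = n ∧
    (Ideal.span (Set.range x)).radical = IsLocalRing.maximalIdeal R

/-- A Noetherian local ring is Cohen–Macaulay iff some system of parameters is a
regular sequence. -/
def IsCohenMacaulayLocal (R : Type*) [CommRing R] [IsLocalRing R] : Prop :=
  ∃ (n : ℕ) (x : Fin n → R), IsSOP x ∧ RingTheory.Sequence.IsRegular R (List.ofFn x)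

open RingTheory.Sequence Submodule in
theorem aux_reg_inter {S : Type*} [CommRing S] {M : Type*} [AddCommGroup M] [Module S M]
    (N : Submodule S M) (xs : List S)
    (h : IsWeaklyRegular (M ⧸ N) xs) :
    Ideal.ofList xs • (⊤ : Submodule S M) ⊓ N = Ideal.ofList xs • N := by
  induction xs using List.reverseRecOn with
  | nil => simp
  | append_singleton ys x ih =>
    rw [isWeaklyRegular_append_iff] at h
    obtain ⟨h1, h2⟩ := h
    have hx : IsSMulRegular ((M ⧸ N) ⧸ (Ideal.ofList ys • ⊤ : Submodule S (M ⧸ N))) x :=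
      (isWeaklyRegular_singleton_iff _ x).mp h2
    set I := Ideal.ofList ys with hI
    have hmap : (N ⊔ I • ⊤).map N.mkQ = (I • ⊤ : Submodule S (M ⧸ N)) := by
      rw [Submodule.map_sup, Submodule.map_smul'', Submodule.map_top, N.range_mkQ]
      have hb : N.map N.mkQ = ⊥ := by
        rw [eq_bot_iff]
        rintro z ⟨y, hy, rfl⟩
        simpa [Submodule.Quotient.mk_eq_zero] using hy
      rw [hb, bot_sup_eq]
    let e : ((M ⧸ N) ⧸ (I • ⊤ : Submodule S (M ⧸ N))) ≃ₗ[S] M ⧸ (N ⊔ I • ⊤) :=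
      (Submodule.quotEquivOfEq _ _ hmap.symm).trans
        (Submodule.quotientQuotientEquivQuotient N (N ⊔ I • ⊤) le_sup_left)
    have hx' : IsSMulRegular (M ⧸ (N ⊔ I • ⊤)) x := (e.isSMulRegular_congr x).mp hx
    have key : ∀ m : M, x • m ∈ N ⊔ I • ⊤ → m ∈ N ⊔ I • ⊤ := by
      intro m hm
      have h0 : x • (N ⊔ I • ⊤).mkQ m = x • (0 : M ⧸ (N ⊔ I • ⊤)) := by
        rw [smul_zero, ← map_smul, Submodule.mkQ_apply, Submodule.Quotient.mk_eq_zero]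
        exact hm
      have := hx' h0
      rwa [Submodule.mkQ_apply, Submodule.Quotient.mk_eq_zero] at this
    refine le_antisymm ?_ (le_inf (smul_mono_right _ le_top) (Submodule.smul_le_right))
    rintro u ⟨hu1, hu2⟩
    rw [Ideal.ofList_append, Ideal.ofList_singleton, Submodule.sup_smul] at hu1
    obtain ⟨v, hv, w, hw, rfl⟩ := Submodule.mem_sup.mp hu1
    have hex : ∃ m : M, w = x • m := by
      refine Submodule.smul_induction_on hw ?_ ?_
      · rintro r hr n -
        obtain ⟨s, rfl⟩ := Ideal.mem_span_singleton'.mp hr |>.imp fun s hs => hs.symm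
        exact ⟨s • n, by rw [mul_smul, smul_comm]⟩
      · rintro w₁ w₂ ⟨m₁, rfl⟩ ⟨m₂, rfl⟩
        exact ⟨m₁ + m₂, (smul_add x m₁ m₂).symm⟩
    obtain ⟨m, rfl⟩ := hex
    have hxm : x • m ∈ N ⊔ I • ⊤ := by
      have : x • m = (v + x • m) - v := by abel
      rw [this]
      exact Submodule.sub_mem _ (Submodule.mem_sup_left hu2) (Submodule.mem_sup_right hv)
    obtain ⟨n, hn, w', hw', hnw'⟩ := Submodule.mem_sup.mp (key m hxm)
    have hsub : (v + x • m) - x • n ∈ I • N := by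
      rw [← ih h1]
      constructor
      · have : (v + x • m) - x • n = v + x • w' := by rw [← hnw']; rw [smul_add]; abel
        rw [this]
        exact Submodule.add_mem _ hv (Submodule.smul_mem _ x hw')
      · exact Submodule.sub_mem _ hu2 (Submodule.smul_mem _ x hn)
    have : v + x • m = ((v + x • m) - x • n) + x • n := by abel
    rw [this, Ideal.ofList_append, Ideal.ofList_singleton, Submodule.sup_smul]
    exact Submodule.add_mem _ (Submodule.mem_sup_left hsub)
      (Submodule.mem_sup_right (Submodule.smul_mem_smul (Ideal.mem_span_singleton_self x) hn))

theorem stmt_1 {S : Type*} [CommRing S] [IsNoetherianRing S]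
    {M : Type*} [AddCommGroup M] [Module S M] (N : Submodule S M)
    (xs : List S) (h : RingTheory.Sequence.IsRegular (M ⧸ N) xs) :
    Ideal.span {a | a ∈ xs} • (⊤ : Submodule S M) ⊓ N =
      Ideal.span {a | a ∈ xs} • N :=
  aux_reg_inter N xs h.toIsWeaklyRegular
end

section
/- Let S be a commutative Noetherian ring and I, J ideals of S such that I is generated by elements forming a regular sequence on S/J. Then I ∩ J = I·J. -/
lemma mem_smul_top_quot' {S : Type*} [CommRing S] (J K : Ideal S) (a : S) :
    Ideal.Quotient.mk J a ∈ (K • ⊤ : Submodule S (S ⧸ J)) ↔ a ∈ J ⊔ K := by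
  rw [Ideal.smul_top_eq_map, Submodule.restrictScalars_mem]
  rw [show (algebraMap S (S ⧸ J)) = Ideal.Quotient.mk J from rfl]
  rw [Ideal.mem_quotient_iff_mem_sup, sup_comm]

lemma key_lemma {S : Type*} [CommRing S] (J : Ideal S) (xs : List S)
    (hreg : ∀ i (hi : i < xs.length) (a : S),
      xs[i] * a ∈ J ⊔ Ideal.span {b | b ∈ xs.take i} →
      a ∈ J ⊔ Ideal.span {b | b ∈ xs.take i}) :
    Ideal.span {a | a ∈ xs} ⊓ J ≤ Ideal.span {a | a ∈ xs} * J := by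
  induction xs using List.reverseRecOn with
  | nil =>
    intro z hz
    have hz1 : z ∈ Ideal.span {a | a ∈ ([] : List S)} := hz.1
    rw [show {a | a ∈ ([] : List S)} = (∅ : Set S) by simp, Ideal.span_empty,
      Ideal.mem_bot] at hz1
    subst hz1; exact zero_mem _
  | append_singleton ys x ih =>
    intro z hz
    obtain ⟨hz1, hz2⟩ := hz
    have hset : {a | a ∈ ys ++ [x]} = {a | a ∈ ys} ∪ {x} := by
      ext a; simp [or_comm]
    rw [hset, Ideal.span_union] at hz1
    obtain ⟨w, hw, t, ht, hwt⟩ := Submodule.mem_sup.mp hz1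
    rw [Ideal.mem_span_singleton] at ht
    obtain ⟨c, hc⟩ := ht
    -- x * c ∈ J ⊔ span ys
    have hx : x * c ∈ J ⊔ Ideal.span {b | b ∈ ys} := by
      have : t = z - w := by rw [← hwt]; ring
      rw [← hc, this]
      exact sub_mem (Submodule.mem_sup_left hz2)
        (Submodule.mem_sup_right hw)
    have hlen : ys.length < (ys ++ [x]).length := by simp
    have hget : (ys ++ [x])[ys.length] = x := by simp
    have htake : (ys ++ [x]).take ys.length = ys := by simp
    have hc' : c ∈ J ⊔ Ideal.span {b | b ∈ ys} := by
      have := hreg ys.length hlen c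
      rw [hget, htake] at this
      exact this hx
    obtain ⟨b, hb, d, hd, hbd⟩ := Submodule.mem_sup.mp hc'
    -- z = (z - x*b) + x*b
    have hsub : z - x * b ∈ Ideal.span {a | a ∈ ys} ⊓ J := by
      constructor
      · have : z - x * b = w + x * d := by
          rw [← hwt, hc, ← hbd]; ring
        rw [this]
        exact add_mem hw (Ideal.mul_mem_left _ _ hd)
      · exact sub_mem hz2 (Ideal.mul_mem_left _ _ hb)
    have hys_le : Ideal.span {a | a ∈ ys} ≤ Ideal.span {a | a ∈ ys ++ [x]} := by
      apply Ideal.span_mono; intro a ha; simp at ha ⊢; exact Or.inl ha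
    have h1 : z - x * b ∈ Ideal.span {a | a ∈ ys ++ [x]} * J := by
      refine Ideal.mul_mono_left hys_le ?_
      apply ih _ hsub
      intro i hi a ha
      have hi' : i < (ys ++ [x]).length := by simp; omega
      have hg : (ys ++ [x])[i] = ys[i] := List.getElem_append_left hi
      have htk : (ys ++ [x]).take i = ys.take i := by
        rw [List.take_append_of_le_length (le_of_lt hi)]
      have := hreg i hi' a
      rw [hg, htk] at this
      exact this ha
    have h2 : x * b ∈ Ideal.span {a | a ∈ ys ++ [x]} * J := by
      apply Ideal.mul_mem_mul _ hb
      apply Ideal.subset_span; simp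
    have : z = (z - x * b) + x * b := by ring
    rw [this]
    exact add_mem h1 h2


theorem stmt_2 {S : Type*} [CommRing S] [IsNoetherianRing S] (I J : Ideal S)
    (xs : List S) (hI : I = Ideal.span {a | a ∈ xs})
    (h : RingTheory.Sequence.IsRegular (S ⧸ J) xs) :
    I ⊓ J = I * J := by
  refine le_antisymm ?_ Ideal.mul_le_inf
  rw [hI]
  apply key_lemma
  intro i hi a ha
  have hr := h.toIsWeaklyRegular.regular_mod_prev i hi
  set K := Ideal.ofList (xs.take i) with hK
  have hmem : Ideal.Quotient.mk J (xs[i] * a) ∈ (K • ⊤ : Submodule S (S ⧸ J)) := by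
    rw [mem_smul_top_quot']
    exact ha
  have hq : xs[i] • (Submodule.Quotient.mk (Ideal.Quotient.mk J a) :
      (S ⧸ J) ⧸ (K • ⊤ : Submodule S (S ⧸ J))) = 0 := by
    rw [← Submodule.Quotient.mk_smul, Submodule.Quotient.mk_eq_zero]
    have : xs[i] • (Ideal.Quotient.mk J a) = Ideal.Quotient.mk J (xs[i] * a) := by
      rw [Algebra.smul_def, Ideal.Quotient.algebraMap_eq, ← map_mul]
    rw [this]
    exact hmem
  have h0 : (Submodule.Quotient.mk (Ideal.Quotient.mk J a) :
      (S ⧸ J) ⧸ (K • ⊤ : Submodule S (S ⧸ J))) = 0 := by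
    apply hr
    show xs[i] • _ = xs[i] • (0 : (S ⧸ J) ⧸ (K • ⊤ : Submodule S (S ⧸ J)))
    rw [hq, smul_zero]
  rw [Submodule.Quotient.mk_eq_zero] at h0
  rw [← mem_smul_top_quot' J K a]
  exact h0
end

section
/- Let R be a Noetherian ring of prime characteristic p. Then the NE closure of the zero ideal, 0^★, equals the intersection of the absolutely minimal prime ideals of R (assuming Spec R is connected). -/
/-!
An element `c` outside every absolutely minimal prime kills a Frobenius power of `x` only if
`x` lies in every absolutely minimal prime, since those primes do not contain `c`. Conversely,
prime avoidance over the finitely many minimal primes gives a `c` lying in every minimal prime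
that is not absolutely minimal but in no absolutely minimal one; if `x` lies in every absolutely
minimal prime, then `c * x` lies in every minimal prime, hence is nilpotent, and a power of `c`
kills all large Frobenius powers of `x`.
-/

section NEClosure

variable {R : Type*} [CommRing R]

lemma Ideal.frobPow_bot {q : ℕ} (hq : q ≠ 0) : (⊥ : Ideal R).frobPow q = ⊥ := by
  simp [Ideal.frobPow, Set.image_singleton, zero_pow hq]

lemma mem_of_mem_neClosure_bot {p : ℕ} (hp : 1 < p) {x : R} (hx : x ∈ neClosure p ⊥)
    {P : Ideal R} (hP : IsAbsolutelyMinimal P) : x ∈ P := by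
  obtain ⟨c, hc, q₀, hq⟩ := hx
  have hPprime : P.IsPrime := hP.1.1.1
  have hzero : c * x ^ p ^ q₀ = 0 := by
    simpa [Ideal.frobPow_bot (pow_ne_zero q₀ (by omega : p ≠ 0))] using
      hq q₀ (Nat.lt_pow_self hp).le
  have hmem : c * x ^ p ^ q₀ ∈ P := hzero ▸ P.zero_mem
  exact hPprime.mem_of_pow_mem _ ((hPprime.mem_or_mem hmem).resolve_left (hc P hP))

lemma mem_neClosure_bot_of_isNilpotent_mul (p : ℕ) {c x : R} (hc : c ∈ neMultipliers R)
    (hcx : IsNilpotent (c * x)) : x ∈ neClosure p ⊥ := by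
  obtain ⟨m, hm⟩ := hcx
  refine ⟨c ^ m, fun P hP hcP => hc P hP (hP.1.1.1.mem_of_pow_mem m hcP), m, fun e he => ?_⟩
  have hzero : c ^ m * x ^ p ^ e = 0 := by
    rw [← Nat.add_sub_cancel' he, pow_add, ← mul_assoc, ← mul_pow, hm, zero_mul]
  rw [hzero]
  exact zero_mem _

lemma exists_mem_minimalPrimes_diff_notMem [IsNoetherianRing R] {S : Set (Ideal R)}
    (hS : S ⊆ minimalPrimes R) :
    ∃ c : R, (∀ Q ∈ minimalPrimes R \ S, c ∈ Q) ∧ ∀ P ∈ S, c ∉ P := by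
  classical
  have hfin := minimalPrimes.finite_of_isNoetherianRing R
  set J : Ideal R := (hfin.sdiff (t := S)).toFinset.inf id
  have hJ : ¬ (J : Set R) ⊆ ⋃ P ∈ S, (P : Set R) := by
    rw [Ideal.subset_union_prime_finite (f := fun P => P) (hfin.subset hS) ⊥ ⊥
      (fun P hP _ _ => (hS hP).1.1)]
    rintro ⟨P, hPS, hJP⟩
    obtain ⟨Q, hQ, hQP⟩ := ((hS hPS).1.1.inf_le').mp hJP
    rw [Set.Finite.mem_toFinset] at hQ
    have hQP_eq : Q = P := le_antisymm hQP ((hS hPS).2 ⟨hQ.1.1.1, bot_le⟩ hQP)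
    exact hQ.2 (hQP_eq ▸ hPS)
  obtain ⟨c, hcJ, hcS⟩ := Set.not_subset.mp hJ
  refine ⟨c, fun Q hQ => ?_, fun P hP hcP => hcS (Set.mem_biUnion hP hcP)⟩
  exact Finset.inf_le (f := id) ((Set.Finite.mem_toFinset _).mpr hQ) hcJ

lemma exists_mem_neMultipliers_isNilpotent_mul [IsNoetherianRing R] {x : R}
    (hx : ∀ P : Ideal R, IsAbsolutelyMinimal P → x ∈ P) :
    ∃ c ∈ neMultipliers R, IsNilpotent (c * x) := by
  obtain ⟨c, hc_other, hc_abs⟩ :=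
    exists_mem_minimalPrimes_diff_notMem (S := {P : Ideal R | IsAbsolutelyMinimal P})
      fun P hP => hP.1
  refine ⟨c, hc_abs, ?_⟩
  have hmem : c * x ∈ sInf (minimalPrimes R) := Ideal.mem_sInf.mpr fun Q hQ => by
    by_cases hQabs : IsAbsolutelyMinimal Q
    · exact Q.mul_mem_left c (hx Q hQabs)
    · exact Q.mul_mem_right x (hc_other Q ⟨hQ, hQabs⟩)
  rw [minimalPrimes, Ideal.sInf_minimalPrimes] at hmem
  exact mem_nilradical.mp hmem

end NEClosure

theorem stmt_4_general {R : Type*} [CommRing R] [IsNoetherianRing R]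
    (p : ℕ) (hp : p.Prime) :
    neClosure p (⊥ : Ideal R) =
      ↑(sInf {P : Ideal R | IsAbsolutelyMinimal P}) := by
  ext x
  simp only [SetLike.mem_coe, Ideal.mem_sInf, Set.mem_ofPred_eq]
  refine ⟨fun hx P hP => mem_of_mem_neClosure_bot hp.one_lt hx hP, fun hx => ?_⟩
  obtain ⟨c, hc, hcx⟩ := exists_mem_neMultipliers_isNilpotent_mul hx
  exact mem_neClosure_bot_of_isNilpotent_mul p hc hcx

theorem stmt_4 {R : Type*} [CommRing R] [IsNoetherianRing R]
    [ConnectedSpace (PrimeSpectrum R)] (p : ℕ) (hp : p.Prime) [CharP R p] :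
    neClosure p (⊥ : Ideal R) =
      ↑(sInf {P : Ideal R | IsAbsolutelyMinimal P}) :=
  stmt_4_general p hp
end

section
/- Let R be a Noetherian ring of prime characteristic p (with Spec R connected) and I an ideal of R with I = I^★ (I is NE-closed). Then for any ideal J of R, the colon ideal I : J is also NE-closed: (I : J)^★ = I : J. -/
lemma pow_mem_frobPow {R : Type*} [CommRing R] {K : Ideal R} {x : R} (hx : x ∈ K) (q : ℕ) :
    x ^ q ∈ K.frobPow q :=
  Ideal.subset_span ⟨x, hx, rfl⟩

lemma frobPow_colon_mul {R : Type*} [CommRing R] {I J : Ideal R} {y : R} (q : ℕ)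
    (hy : y ∈ (Submodule.colon I J).frobPow q) {j : R} (hj : j ∈ J) :
    y * j ^ q ∈ I.frobPow q := by
  induction hy using Submodule.span_induction with
  | mem a ha =>
    obtain ⟨b, hb, rfl⟩ := ha
    rw [← mul_pow]
    exact pow_mem_frobPow (Submodule.mem_colon.mp hb j hj) q
  | zero => simp
  | add a b _ _ ha hb => rw [add_mul]; exact Ideal.add_mem _ ha hb
  | smul r a _ ha => rw [smul_eq_mul, mul_assoc]; exact Ideal.mul_mem_left _ _ ha

theorem stmt_5 {R : Type*} [CommRing R] [IsNoetherianRing R]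
    [ConnectedSpace (PrimeSpectrum R)] (p : ℕ) (hp : p.Prime) [CharP R p]
    (I : Ideal R) (hI : neClosure p I = (I : Set R)) (J : Ideal R) :
    neClosure p (Submodule.colon I J) = ↑(Submodule.colon I J) := by
  ext x
  constructor
  · rintro ⟨c, hc, q₀, h⟩
    rw [SetLike.mem_coe, Submodule.mem_colon]
    intro j hj
    rw [smul_eq_mul, ← SetLike.mem_coe, ← hI]
    refine ⟨c, hc, q₀, fun e he => ?_⟩
    have hq : c * (x * j) ^ p ^ e = c * x ^ p ^ e * j ^ p ^ e := by ring
    rw [hq]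
    exact frobPow_colon_mul _ (h e he) hj
  · intro hx
    refine ⟨1, fun P hP => hP.1.1.1.ne_top.imp fun h1 => ?_, 1, fun e _ => ?_⟩
    · exact (Ideal.eq_top_iff_one P).mpr h1
    · rw [one_mul]
      exact pow_mem_frobPow hx _
end

section
/- Let R and S be Noetherian rings of prime characteristic p (each with connected spectrum) and h : R → S a ring homomorphism with h(R^•) ⊆ S^•. Then for any ideal I of R, h(I^★) ⊆ (I·S)^★. -/
theorem stmt_6 {R S : Type*} [CommRing R] [CommRing S]
    [IsNoetherianRing R] [IsNoetherianRing S]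
    [ConnectedSpace (PrimeSpectrum R)] [ConnectedSpace (PrimeSpectrum S)]
    (p : ℕ) (hp : p.Prime) [CharP R p] [CharP S p]
    (h : R →+* S) (hmul : h '' neMultipliers R ⊆ neMultipliers S)
    (I : Ideal R) :
    h '' neClosure p I ⊆ neClosure p (I.map h) := by
  rintro _ ⟨x, ⟨c, hc, q₀, hq⟩, rfl⟩
  refine ⟨h c, hmul ⟨c, hc, rfl⟩, q₀, fun e he => ?_⟩
  have := hq e he
  have hmap : (I.frobPow (p ^ e)).map h ≤ (I.map h).frobPow (p ^ e) := by
    rw [Ideal.frobPow, Ideal.map_span]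
    apply Ideal.span_mono
    rintro _ ⟨_, ⟨a, ha, rfl⟩, rfl⟩
    exact ⟨h a, Ideal.mem_map_of_mem h ha, (map_pow h a _).symm⟩
  have : h (c * x ^ p ^ e) ∈ (I.map h).frobPow (p ^ e) :=
    hmap (Ideal.mem_map_of_mem h this)
  simpa using this
end

section
/- Let R be a Noetherian ring of prime characteristic p with nilradical 𝔑, and suppose 𝔑^[q'] = 0. Let P₁,…,P_r be the absolutely minimal primes, and for each i choose dᵢ ∉ Pᵢ lying in every other minimal prime. If x ∈ R, I an ideal, and for each i the image of x in R/Pᵢ lies in (I·R/Pᵢ)^★, then x ∈ I^★ in R. -/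
/-!
Lift, for each absolutely minimal prime `Pᵢ`, the test element of `R/Pᵢ` to some `cᵢ ∉ Pᵢ`:
for large `q` this gives `cᵢ xᵠ = zᵢ + yᵢ` with `zᵢ ∈ I^[q]` and `yᵢ ∈ Pᵢ`. Since `dᵢ` lies in
every other minimal prime, `dᵢ yᵢ` is nilpotent, so raising to the power `Q = p^q'` kills it
and, Frobenius being additive, `(dᵢ cᵢ)^Q x^{qQ} = dᵢ^Q zᵢ^Q ∈ I^[qQ]`. The sum
`c = ∑ (dᵢ cᵢ)^Q` avoids every `Pⱼ`, because all its terms but the `j`-th lie in `Pⱼ`, so `c`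
is a test element for `x ∈ I^★`.
-/

open Filter

namespace Ideal

variable {R : Type*} [CommRing R]

theorem pow_mem_frobPow {I : Ideal R} {a : R} (ha : a ∈ I) (q : ℕ) : a ^ q ∈ I.frobPow q :=
  subset_span ⟨a, ha, rfl⟩

theorem frobPow_map_le_map_frobPow {S : Type*} [CommRing S] {f : R →+* S}
    (hf : Function.Surjective f) (I : Ideal R) (q : ℕ) :
    (I.map f).frobPow q ≤ (I.frobPow q).map f := by
  rw [frobPow, span_le]
  rintro _ ⟨a, ha, rfl⟩
  obtain ⟨b, hb, rfl⟩ := (mem_map_iff_of_surjective f hf).mp ha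
  show f b ^ q ∈ _
  rw [← map_pow]
  exact mem_map_of_mem f (pow_mem_frobPow hb q)

theorem pow_expChar_pow_mem_frobPow_mul (p : ℕ) [ExpChar R p] {I : Ideal R} {q : ℕ} {z : R}
    (hz : z ∈ I.frobPow q) (n : ℕ) : z ^ p ^ n ∈ I.frobPow (q * p ^ n) := by
  have hle : (I.frobPow q).map (iterateFrobenius R p n) ≤ I.frobPow (q * p ^ n) := by
    rw [frobPow, map_span, span_le]
    rintro _ ⟨_, ⟨a, ha, rfl⟩, rfl⟩
    exact subset_span ⟨a, ha, by rw [iterateFrobenius_def, ← pow_mul]⟩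
  exact hle (mem_map_of_mem (iterateFrobenius R p n) hz)

theorem sum_notMem_of_notMem_of_forall_ne {ι : Type*} [DecidableEq ι] {s : Finset ι}
    {P : Ideal R} {a : ι → R} {j : ι} (hj : j ∈ s) (haj : a j ∉ P)
    (ha : ∀ i ∈ s, i ≠ j → a i ∈ P) : ∑ i ∈ s, a i ∉ P := by
  have hrest : ∑ i ∈ s.erase j, a i ∈ P :=
    P.sum_mem fun i hi => ha i (Finset.mem_of_mem_erase hi) (Finset.ne_of_mem_erase hi)
  rwa [← Finset.add_sum_erase s a hj, P.add_mem_iff_left hrest]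

end Ideal

section NEClosure

variable {R : Type*} [CommRing R]

theorem isAbsolutelyMinimal_bot [IsDomain R] : IsAbsolutelyMinimal (⊥ : Ideal R) :=
  ⟨(IsDomain.minimalPrimes_eq_singleton_bot R).ge rfl,
    ringKrullDim_eq_of_ringEquiv (RingEquiv.quotientBot R)⟩

theorem ne_zero_of_mem_neMultipliers [IsDomain R] {c : R} (hc : c ∈ neMultipliers R) : c ≠ 0 :=
  fun h => hc ⊥ isAbsolutelyMinimal_bot (h ▸ Ideal.zero_mem ⊥)

theorem mem_neClosure_iff {p : ℕ} (hp : 1 < p) {I : Ideal R} {x : R} :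
    x ∈ neClosure p I ↔
      ∃ c ∈ neMultipliers R, ∀ᶠ e in atTop, c * x ^ p ^ e ∈ I.frobPow (p ^ e) := by
  refine ⟨fun ⟨c, hc, q₀, h⟩ => ⟨c, hc, ?_⟩, fun ⟨c, hc, h⟩ => ?_⟩
  · exact ((tendsto_pow_atTop_atTop_of_one_lt hp).eventually_ge_atTop q₀).mono h
  · obtain ⟨N, hN⟩ := eventually_atTop.mp h
    exact ⟨c, hc, p ^ N, fun e he => hN e ((Nat.pow_le_pow_iff_right hp).mp he)⟩

theorem exists_sub_mem_of_mk_mem_neClosure {p : ℕ} (hp : 1 < p) {P : Ideal R} [P.IsPrime]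
    {I : Ideal R} {x : R}
    (hx : Ideal.Quotient.mk P x ∈ neClosure p (I.map (Ideal.Quotient.mk P))) :
    ∃ c ∉ P, ∀ᶠ e in atTop, ∃ z ∈ I.frobPow (p ^ e), c * x ^ p ^ e - z ∈ P := by
  obtain ⟨c', hc', hev⟩ := (mem_neClosure_iff hp).mp hx
  obtain ⟨c, rfl⟩ := Ideal.Quotient.mk_surjective c'
  refine ⟨c, fun h => ne_zero_of_mem_neMultipliers hc' (Ideal.Quotient.eq_zero_iff_mem.mpr h),
    hev.mono fun e he => ?_⟩
  rw [← map_pow, ← map_mul] at he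
  obtain ⟨z, hz, hzx⟩ := (Ideal.mem_map_iff_of_surjective _ Ideal.Quotient.mk_surjective).mp
    (Ideal.frobPow_map_le_map_frobPow Ideal.Quotient.mk_surjective I _ he)
  exact ⟨z, hz, Ideal.Quotient.mk_eq_mk_iff_sub_mem _ _ |>.mp hzx.symm⟩

theorem pow_eq_zero_of_frobPow_nilradical_eq_bot {q n : ℕ}
    (hnil : (nilradical R).frobPow q = ⊥) (hqn : q ≤ n) {a : R} (ha : a ∈ nilradical R) :
    a ^ n = 0 := by
  have hq : a ^ q = 0 := by
    simpa only [hnil, Ideal.mem_bot] using Ideal.pow_mem_frobPow ha q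
  rw [← Nat.add_sub_cancel' hqn, pow_add, hq, zero_mul]

theorem mul_mem_nilradical_of_mem_minimalPrimes_ne {P : Ideal R} {d y : R}
    (hd : ∀ Q ∈ minimalPrimes R, Q ≠ P → d ∈ Q) (hy : y ∈ P) : d * y ∈ nilradical R := by
  rw [nilradical, ← Ideal.sInf_minimalPrimes, Submodule.mem_sInf]
  intro Q hQ
  by_cases hQP : Q = P
  · exact Ideal.mul_mem_left Q d (hQP ▸ hy)
  · exact Ideal.mul_mem_right y Q (hd Q hQ hQP)

theorem mul_pow_mem_frobPow_of_sub_mem (p : ℕ) [ExpChar R p] {m : ℕ}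
    (hnil : ∀ a ∈ nilradical R, a ^ p ^ m = 0) {P I : Ideal R} {c d x z : R} {q : ℕ}
    (hd : ∀ Q ∈ minimalPrimes R, Q ≠ P → d ∈ Q) (hz : z ∈ I.frobPow q)
    (hy : c * x ^ q - z ∈ P) :
    (d * c) ^ p ^ m * x ^ (q * p ^ m) ∈ I.frobPow (q * p ^ m) := by
  have hkill := hnil _ (mul_mem_nilradical_of_mem_minimalPrimes_ne hd hy)
  have hsplit : (d * c) ^ p ^ m * x ^ (q * p ^ m) = (d * z + d * (c * x ^ q - z)) ^ p ^ m := by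
    rw [pow_mul]; ring
  rw [hsplit, add_pow_expChar_pow, hkill, add_zero, mul_pow]
  exact Ideal.mul_mem_left _ _ (Ideal.pow_expChar_pow_mem_frobPow_mul p hz m)

end NEClosure

theorem stmt_15_general {R : Type*} [CommRing R] (p : ℕ) (hp : p.Prime) [CharP R p]
    (q' : ℕ) (hnil : (nilradical R).frobPow q' = ⊥)
    (r : ℕ) (P : Fin r → Ideal R) (hPinj : Function.Injective P)
    (hPall : ∀ J : Ideal R, IsAbsolutelyMinimal J ↔ ∃ i, J = P i)
    (d : Fin r → R) (hd1 : ∀ i, d i ∉ P i)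
    (hd2 : ∀ i, ∀ Q ∈ minimalPrimes R, Q ≠ P i → d i ∈ Q)
    (I : Ideal R) (x : R)
    (hx : ∀ i, Ideal.Quotient.mk (P i) x ∈
      neClosure p (I.map (Ideal.Quotient.mk (P i)))) :
    x ∈ neClosure p I := by
  have : ExpChar R p := .prime hp
  have hPmin (i : Fin r) : P i ∈ minimalPrimes R := ((hPall _).mpr ⟨i, rfl⟩).1
  have hPprime (i : Fin r) : (P i).IsPrime := (hPmin i).1.1
  choose c hcP hev using fun i => exists_sub_mem_of_mk_mem_neClosure hp.one_lt (hx i)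
  have hQ : 0 < p ^ q' := pow_pos hp.pos q'
  have hkill (a) (ha : a ∈ nilradical R) : a ^ p ^ q' = 0 :=
    pow_eq_zero_of_frobPow_nilradical_eq_bot hnil (Nat.lt_pow_self hp.one_lt).le ha
  refine (mem_neClosure_iff hp.one_lt).mpr ⟨∑ i, (d i * c i) ^ p ^ q', ?_, ?_⟩
  · rintro J hJ
    obtain ⟨j, rfl⟩ := (hPall J).mp hJ
    refine Ideal.sum_notMem_of_notMem_of_forall_ne (Finset.mem_univ j) ?_ fun i _ hij => ?_
    · rw [(hPprime j).pow_mem_iff_mem _ hQ, (hPprime j).mul_mem_iff_mem_or_mem]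
      exact not_or.mpr ⟨hd1 j, hcP j⟩
    · exact Ideal.pow_mem_of_mem _ ((P j).mul_mem_right _
        (hd2 i (P j) (hPmin j) fun h => hij (hPinj h).symm)) _ hQ
  · filter_upwards [(tendsto_sub_atTop_nat q').eventually (eventually_all.mpr hev),
      eventually_ge_atTop q'] with e he hqe
    rw [← Nat.sub_add_cancel hqe, pow_add, Finset.sum_mul]
    refine Ideal.sum_mem _ fun i _ => ?_
    obtain ⟨z, hz, hy⟩ := he i
    exact mul_pow_mem_frobPow_of_sub_mem p hkill (hd2 i) hz hy

theorem stmt_15 {R : Type*} [CommRing R] [IsNoetherianRing R]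
    [ConnectedSpace (PrimeSpectrum R)] (p : ℕ) (hp : p.Prime) [CharP R p]
    (q' : ℕ) (hnil : (nilradical R).frobPow q' = ⊥)
    (r : ℕ) (P : Fin r → Ideal R) (hPinj : Function.Injective P)
    (hPall : ∀ J : Ideal R, IsAbsolutelyMinimal J ↔ ∃ i, J = P i)
    (d : Fin r → R) (hd1 : ∀ i, d i ∉ P i)
    (hd2 : ∀ i, ∀ Q ∈ minimalPrimes R, Q ≠ P i → d i ∈ Q)
    (I : Ideal R) (x : R)
    (hx : ∀ i, Ideal.Quotient.mk (P i) x ∈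
      neClosure p (I.map (Ideal.Quotient.mk (P i)))) :
    x ∈ neClosure p I :=
  stmt_15_general p hp q' hnil r P hPinj hPall d hd1 hd2 I x hx
end

section
/- Let R be a Noetherian ring of prime characteristic p with connected spectrum. If for every absolutely minimal prime P of R the domain R/P has a weak test element (for tight closure), then R has a weak NE-test element: an element c ∈ R^• such that for all ideals I and all x ∈ I^★, c·x^q ∈ I^[q] for all q ≥ some fixed q'. -/
/-! Take `c = ∑ (c_P d_P) ^ q₀` over the absolutely minimal primes `P`, where `c_P` lifts a weak
test element of `R ⧸ P`, `d_P ∉ P` lies in every other minimal prime and `q₀ = p ^ k` with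
`(nilradical R) ^ k = 0`. Only the `Q`-th summand avoids `Q`, so `c ∈ R^•`. If `x ∈ I^★`, its
image in `R ⧸ P` lies in the tight closure of `I (R ⧸ P)`, so `c_P x ^ q₁ ≡ y (mod P)` with
`y ∈ I^[q₁]`. Multiplying by `d_P` puts the difference in every minimal prime, hence in the
nilradical, and raising to the `q₀`-th power (additive in characteristic `p`) kills it:
`(c_P d_P) ^ q₀ x ^ (q₁ q₀) = (d_P y) ^ q₀ ∈ I^[q₁ q₀]`. -/

namespace Ideal

variable {R S : Type*} [CommRing R] [CommRing S]

lemma map_frobPow (f : R →+* S) [RingHomSurjective f] (I : Ideal R) (q : ℕ) :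
    (I.frobPow q).map f = (I.map f).frobPow q := by
  simp [frobPow, map_span, map_eq_submodule_map, Set.image_image]

lemma pow_expChar_pow_mem_frobPow {p : ℕ} [ExpChar R p] {I : Ideal R} {y : R} {q : ℕ}
    (hy : y ∈ I.frobPow q) (e : ℕ) : y ^ p ^ e ∈ I.frobPow (q * p ^ e) := by
  have h := mem_map_of_mem (iterateFrobenius R p e) hy
  rw [frobPow, map_span, Set.image_image] at h
  simpa only [frobPow, iterateFrobenius_def, ← pow_mul] using h

lemma sum_notMem_of_forall_ne_mem {ι : Type*} {s : Finset ι} {f : ι → R} {Q : Ideal R} {i : ι}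
    (hi : i ∈ s) (hfi : f i ∉ Q) (h : ∀ j ∈ s, j ≠ i → f j ∈ Q) : ∑ j ∈ s, f j ∉ Q := by
  classical
  rw [← Finset.add_sum_erase s f hi]
  exact fun hsum => hfi <| (Q.add_mem_iff_left <| Q.sum_mem fun j hj =>
    h j (Finset.mem_of_mem_erase hj) (Finset.ne_of_mem_erase hj)).1 hsum

lemma sum_mul_pow_notMem {ι : Type*} {s : Finset ι} {c d : ι → R} {Q : Ideal R} [Q.IsPrime]
    {i : ι} (hi : i ∈ s) (hc : c i ∉ Q) (hdi : d i ∉ Q) (hd : ∀ j ∈ s, j ≠ i → d j ∈ Q)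
    {n : ℕ} (hn : n ≠ 0) : ∑ j ∈ s, (c j * d j) ^ n ∉ Q :=
  sum_notMem_of_forall_ne_mem hi (mt (IsPrime.mem_of_pow_mem ‹_› n) (IsPrime.mul_notMem ‹_› hc hdi))
    fun j hj hji => pow_mem_of_mem Q (Q.mul_mem_left _ (hd j hj hji)) n (Nat.pos_of_ne_zero hn)

end Ideal

section MinimalPrimes

variable {R : Type*} [CommRing R]

lemma exists_notMem_forall_mem_minimalPrimes_ne [IsNoetherianRing R] {P : Ideal R}
    (hP : P ∈ minimalPrimes R) : ∃ d ∉ P, ∀ Q ∈ minimalPrimes R, Q ≠ P → d ∈ Q := by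
  classical
  have hfin := minimalPrimes.finite_of_isNoetherianRing R
  by_cases h : (hfin.toFinset.erase P).inf id ≤ P
  · obtain ⟨Q, hQ, hQP⟩ := (Ideal.IsPrime.inf_le' hP.1.1).1 h
    have hQmin : Q ∈ minimalPrimes R := hfin.mem_toFinset.1 (Finset.mem_of_mem_erase hQ)
    exact absurd (le_antisymm hQP (hP.2 hQmin.1 hQP)) (Finset.ne_of_mem_erase hQ)
  · obtain ⟨d, hd, hdP⟩ := SetLike.not_le_iff_exists.1 h
    exact ⟨d, hdP, fun Q hQ hQP =>
      SetLike.le_def.1 (Finset.inf_le (f := id) (by simp [hQ, hQP])) hd⟩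

lemma mul_mem_nilradical_of_forall_ne_mem {P : Ideal R} {d z : R}
    (hd : ∀ Q ∈ minimalPrimes R, Q ≠ P → d ∈ Q) (hz : z ∈ P) : d * z ∈ nilradical R := by
  rw [nilradical, ← Ideal.sInf_minimalPrimes]
  refine Submodule.mem_sInf.2 fun (Q : Ideal R) hQ => ?_
  obtain rfl | hQP := eq_or_ne Q P
  · exact Q.mul_mem_left d hz
  · exact Q.mul_mem_right z (hd Q hQ hQP)

lemma IsNoetherianRing.exists_forall_pow_eq_zero [IsNoetherianRing R] :
    ∃ k, ∀ x ∈ nilradical R, x ^ k = 0 := by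
  obtain ⟨k, hk⟩ := IsNoetherianRing.isNilpotent_nilradical R
  exact ⟨k, fun x hx => by simpa [hk] using Ideal.pow_mem_pow hx k⟩

end MinimalPrimes

section Frobenius

variable {R : Type*} [CommRing R] {p : ℕ}

lemma pow_expChar_pow_mem_frobPow_of_sub_mem_nilradical [ExpChar R p] {e₀ : ℕ}
    (hnil : ∀ n ∈ nilradical R, n ^ p ^ e₀ = 0) {I : Ideal R} {q : ℕ} {a b : R}
    (hab : a - b ∈ nilradical R) (hb : b ∈ I.frobPow q) :
    a ^ p ^ e₀ ∈ I.frobPow (q * p ^ e₀) := by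
  have hpow : a ^ p ^ e₀ = b ^ p ^ e₀ := by
    rw [← sub_eq_zero, ← sub_pow_expChar_pow, hnil _ hab]
  exact hpow ▸ Ideal.pow_expChar_pow_mem_frobPow hb e₀

lemma mul_pow_mem_frobPow_of_mem_frobPow_map_mk [ExpChar R p] {e₀ : ℕ}
    (hnil : ∀ n ∈ nilradical R, n ^ p ^ e₀ = 0) {P : Ideal R} {d : R}
    (hd : ∀ Q ∈ minimalPrimes R, Q ≠ P → d ∈ Q) {I : Ideal R} {c x : R} {e₁ : ℕ}
    (h : Ideal.Quotient.mk P (c * x ^ p ^ e₁) ∈ (I.map (Ideal.Quotient.mk P)).frobPow (p ^ e₁)) :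
    (c * d) ^ p ^ e₀ * x ^ p ^ (e₁ + e₀) ∈ I.frobPow (p ^ (e₁ + e₀)) := by
  rw [← Ideal.map_frobPow, Ideal.mem_map_iff_of_surjective _ Ideal.Quotient.mk_surjective] at h
  obtain ⟨y, hy, hyx⟩ := h
  have hsub : d * (c * x ^ p ^ e₁) - d * y ∈ nilradical R := by
    rw [← mul_sub]
    exact mul_mem_nilradical_of_forall_ne_mem hd (Ideal.Quotient.eq.1 hyx.symm)
  have hmem := pow_expChar_pow_mem_frobPow_of_sub_mem_nilradical hnil hsub
    (I.frobPow _ |>.mul_mem_left d hy)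
  rw [← pow_add] at hmem
  convert hmem using 1
  rw [mul_pow, mul_pow, mul_pow, ← pow_mul, ← pow_add]
  ring

lemma mk_mem_tightClosure_of_mem_neClosure {P : Ideal R} (hP : IsAbsolutelyMinimal P)
    {I : Ideal R} {x : R} (hx : x ∈ neClosure p I) :
    Ideal.Quotient.mk P x ∈ tightClosure p (I.map (Ideal.Quotient.mk P)) := by
  obtain ⟨c, hc, q₀, hq₀⟩ := hx
  have := hP.1.1.1
  refine ⟨Ideal.Quotient.mk P c, ?_, q₀, fun e he => ?_⟩
  · simpa [tightMultipliers, IsDomain.minimalPrimes_eq_singleton_bot,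
      Ideal.Quotient.eq_zero_iff_mem] using hc P hP
  · simpa [← Ideal.map_frobPow] using Ideal.mem_map_of_mem (Ideal.Quotient.mk P) (hq₀ e he)

end Frobenius

theorem stmt_16_general {R : Type*} [CommRing R] [IsNoetherianRing R]
    (p : ℕ) (hp : p.Prime) [CharP R p]
    (htest : ∀ P : Ideal R, IsAbsolutelyMinimal P →
      ∃ (c : R ⧸ P) (q'' : ℕ), c ≠ 0 ∧ ∀ (J : Ideal (R ⧸ P)) (x : R ⧸ P),
        x ∈ tightClosure p J → ∀ e : ℕ, q'' ≤ p ^ e →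
          c * x ^ p ^ e ∈ J.frobPow (p ^ e)) :
    ∃ (c : R) (q' : ℕ), c ∈ neMultipliers R ∧ ∀ (I : Ideal R) (x : R),
      x ∈ neClosure p I → ∀ e : ℕ, q' ≤ p ^ e →
        c * x ^ p ^ e ∈ I.frobPow (p ^ e) := by
  have : Fact p.Prime := ⟨hp⟩
  choose! c₀ q'' hc₀ htc using htest
  choose c hc using fun P : Ideal R => Ideal.Quotient.mk_surjective (c₀ P)
  choose! d hdP hdQ using fun (P : Ideal R) (hP : IsAbsolutelyMinimal P) =>
    exists_notMem_forall_mem_minimalPrimes_ne hP.1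
  obtain ⟨k, hk⟩ := IsNoetherianRing.exists_forall_pow_eq_zero (R := R)
  have hnil : ∀ n ∈ nilradical R, n ^ p ^ k = 0 := fun n hn =>
    pow_eq_zero_of_le (Nat.lt_pow_self hp.one_lt).le (hk n hn)
  have hS : {P : Ideal R | IsAbsolutelyMinimal P}.Finite :=
    (minimalPrimes.finite_of_isNoetherianRing R).subset fun P hP => hP.1
  set E := hS.toFinset.sup q''
  refine ⟨∑ P ∈ hS.toFinset, (c P * d P) ^ p ^ k, p ^ (k + E), fun Q hQ => ?_, ?_⟩
  · have := hQ.1.1.1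
    refine Ideal.sum_mul_pow_notMem (hS.mem_toFinset.2 hQ) ?_ (hdP Q hQ)
      (fun P hP hPQ => hdQ P (hS.mem_toFinset.1 hP) Q hQ.1 hPQ.symm) (pow_ne_zero _ hp.ne_zero)
    rw [← Ideal.Quotient.eq_zero_iff_mem, hc]
    exact hc₀ Q hQ
  · intro I x hx e he
    obtain ⟨e₁, rfl, hE⟩ : ∃ e₁, e = e₁ + k ∧ E ≤ e₁ :=
      ⟨e - k, by have := (Nat.pow_le_pow_iff_right hp.one_lt).1 he; omega⟩
    rw [Finset.sum_mul]
    refine Ideal.sum_mem _ fun P hPS => ?_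
    have hP := hS.mem_toFinset.1 hPS
    refine mul_pow_mem_frobPow_of_mem_frobPow_map_mk hnil (hdQ P hP) ?_
    rw [map_mul, map_pow, hc]
    refine htc P hP _ _ (mk_mem_tightClosure_of_mem_neClosure hP hx) e₁ ?_
    calc q'' P ≤ E := Finset.le_sup hPS
      _ ≤ p ^ e₁ := ((Nat.lt_pow_self hp.one_lt).trans_le (Nat.pow_le_pow_right hp.pos hE)).le

theorem stmt_16 {R : Type*} [CommRing R] [IsNoetherianRing R]
    [ConnectedSpace (PrimeSpectrum R)] (p : ℕ) (hp : p.Prime) [CharP R p]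
    (htest : ∀ P : Ideal R, IsAbsolutelyMinimal P →
      ∃ (c : R ⧸ P) (q'' : ℕ), c ≠ 0 ∧ ∀ (J : Ideal (R ⧸ P)) (x : R ⧸ P),
        x ∈ tightClosure p J → ∀ e : ℕ, q'' ≤ p ^ e →
          c * x ^ p ^ e ∈ J.frobPow (p ^ e)) :
    ∃ (c : R) (q' : ℕ), c ∈ neMultipliers R ∧ ∀ (I : Ideal R) (x : R),
      x ∈ neClosure p I → ∀ e : ℕ, q' ≤ p ^ e →
        c * x ^ p ^ e ∈ I.frobPow (p ^ e) :=
  stmt_16_general p hp htest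
end
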